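/- arXiv:math/9811122 — 3 statements merged into one kernel-verified Lean document; each statement's English description precedes it below -/
import Mathlib

section
/- Let A be a unital complex star-algebra, σ : ℝ → Aut(A) a one-parameter group of star-automorphisms, and let λ, δ : ℝ → A be commuting one-parameter groups of unitaries (λ(s)δ(t) = δ(t)λ(s) for all s,t) such that σ_t(δ(s)) = λ(st)·δ(s) for all s,t ∈ ℝ. Then σ_t(λ(s)) = λ(s) for all s,t ∈ ℝ, i.e., λ is invariant under σ. -/
/-!
Fix `s` and write `c t = λ(s t)`, `d = δ(s)`, so that `σ_t d = c t * d`. Expanding `σ_{a+b} d`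
in two ways gives `σ_a (c b) * c a * d = c a * c b * d`; since `d` and `c a` are units and
`c a`, `c b` commute, `σ_a (c b) = c b`. Taking `b = 1` gives the theorem.
-/

section OneParameterGroup

variable {G M : Type*} [Monoid M] {u : G → M}

theorem isUnit_of_map_add [AddGroup G] (hu : ∀ a b, u (a + b) = u a * u b) (hu0 : u 0 = 1)
    (a : G) : IsUnit (u a) :=
  ⟨⟨u a, u (-a), by rw [← hu, add_neg_cancel, hu0], by rw [← hu, neg_add_cancel, hu0]⟩, rfl⟩

theorem commute_of_map_add [AddCommMagma G] (hu : ∀ a b, u (a + b) = u a * u b) (a b : G) :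
    Commute (u a) (u b) := by
  rw [Commute, SemiconjBy, ← hu, ← hu, add_comm]

end OneParameterGroup

theorem apply_eq_self_of_map_eq_mul {G M F : Type*} [AddCommGroup G] [Monoid M]
    [FunLike F M M] [MonoidHomClass F M M]
    (σ : G → F) (hσ : ∀ a b x, σ (a + b) x = σ a (σ b x))
    {c : G → M} (hc : ∀ a b, c (a + b) = c a * c b) (hc0 : c 0 = 1)
    {d : M} (hd : IsUnit d) (hrel : ∀ t, σ t d = c t * d) (a b : G) :
    σ a (c b) = c b := by
  have expand : σ a (c b) * c a * d = c b * c a * d := by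
    calc σ a (c b) * c a * d = σ (a + b) d := by rw [hσ, hrel b, map_mul, hrel a, mul_assoc]
      _ = c b * c a * d := by rw [hrel, hc, (commute_of_map_add hc a b).eq]
  exact (isUnit_of_map_add hc hc0 a).mul_left_injective (hd.mul_left_injective expand)

theorem relative_invariance_forces_invariance_of_lambda_general {A : Type*} [Ring A] [StarRing A]
    [Algebra ℂ A]
    (σ : ℝ → A ≃⋆ₐ[ℂ] A) (hσ : ∀ (s t : ℝ) (x : A), σ (s + t) x = σ s (σ t x))
    (lam δ : ℝ → A)
    (hl : ∀ s t : ℝ, lam (s + t) = lam s * lam t) (hl0 : lam 0 = 1)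
    (hd : ∀ s t : ℝ, δ (s + t) = δ s * δ t) (hd0 : δ 0 = 1)
    (hrel : ∀ s t : ℝ, σ t (δ s) = lam (s * t) * δ s) :
    ∀ s t : ℝ, σ t (lam s) = lam s := by
  intro s t
  have hc : ∀ a b : ℝ, lam (s * (a + b)) = lam (s * a) * lam (s * b) := fun a b => by
    rw [mul_add, hl]
  have hc0 : lam (s * 0) = 1 := by rw [mul_zero, hl0]
  simpa using apply_eq_self_of_map_eq_mul σ hσ hc hc0 (isUnit_of_map_add hd hd0 s) (hrel s) t 1

theorem relative_invariance_forces_invariance_of_lambda {A : Type*} [Ring A] [StarRing A]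
    [Algebra ℂ A] [StarModule ℂ A]
    (σ : ℝ → A ≃⋆ₐ[ℂ] A) (hσ : ∀ (s t : ℝ) (x : A), σ (s + t) x = σ s (σ t x))
    (lam δ : ℝ → A)
    (hl : ∀ s t : ℝ, lam (s + t) = lam s * lam t) (hl0 : lam 0 = 1)
    (hls : ∀ t : ℝ, star (lam t) = lam (-t))
    (hd : ∀ s t : ℝ, δ (s + t) = δ s * δ t) (hd0 : δ 0 = 1)
    (hds : ∀ t : ℝ, star (δ t) = δ (-t))
    (hcomm : ∀ s t : ℝ, lam s * δ t = δ t * lam s)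
    (hrel : ∀ s t : ℝ, σ t (δ s) = lam (s * t) * δ s) :
    ∀ s t : ℝ, σ t (lam s) = lam s :=
  relative_invariance_forces_invariance_of_lambda_general σ hσ lam δ hl hl0 hd hd0 hrel
end

section
/- Let G be a group, Z its centre, σ : ℝ → Aut(G) a homomorphism fixing Z pointwise, u : ℝ → G a σ-cocycle (u(s+t) = u(t)σ_t(u(s))), and λ : ℝ → Z a homomorphism such that u(s+t) = λ(st)·u(t)·u(s) for all s,t ∈ ℝ. Then v(t) := λ(t²/2)⁻¹·u(t) defines a group homomorphism from (ℝ,+) to G, i.e., v(s+t) = v(s)·v(t). -/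
/-!
Since `λ` is additive with central values, `q t := λ(t²/2)` satisfies
`q(s+t) = λ(st) q(s) q(t)`, so `λ(st)` is the coboundary of the central function `q`.
Dividing `u` by `q` removes exactly the defect `λ(st)` in `u(s+t) = λ(st) u(s) u(t)`.
-/

theorem inv_mul_map_add_of_central_coboundary {A G : Type*} [Add A] [Group G] (q u : A → G)
    (hq : ∀ a, q a ∈ Subgroup.center G)
    (hu : ∀ s t, u (s + t) = q (s + t) * (q t)⁻¹ * (q s)⁻¹ * (u s * u t)) (s t : A) :
    (q (s + t))⁻¹ * u (s + t) = (q s)⁻¹ * u s * ((q t)⁻¹ * u t) := by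
  have hcomm : Commute (q t)⁻¹ ((q s)⁻¹ * u s) :=
    Commute.inv_left (Subgroup.mem_center_iff.mp (hq t) _).symm
  calc (q (s + t))⁻¹ * u (s + t) = (q t)⁻¹ * ((q s)⁻¹ * u s) * u t := by rw [hu]; group
    _ = (q s)⁻¹ * u s * ((q t)⁻¹ * u t) := by rw [hcomm.eq]; group

theorem map_mul_eq_coboundary_half_sq {K G : Type*} [Field K] [NeZero (2 : K)] [Group G]
    (lam : K → G) (hlhom : ∀ s t, lam (s + t) = lam s * lam t) (s t : K) :
    lam (s * t) = lam ((s + t) ^ 2 / 2) * (lam (t ^ 2 / 2))⁻¹ * (lam (s ^ 2 / 2))⁻¹ := by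
  have hsplit : (s + t) ^ 2 / 2 = s * t + s ^ 2 / 2 + t ^ 2 / 2 := by
    field_simp
    ring
  rw [hsplit, hlhom, hlhom, mul_inv_cancel_right, mul_inv_cancel_right]

theorem one_parameter_group_from_cocycle_general {G : Type*} [Group G]
    (u : ℝ → G)
    (lam : ℝ → G) (hlZ : ∀ t : ℝ, lam t ∈ Subgroup.center G)
    (hlhom : ∀ s t : ℝ, lam (s + t) = lam s * lam t)
    (hul : ∀ s t : ℝ, u (s + t) = lam (s * t) * (u t * u s))
    (v : ℝ → G) (hv : ∀ t : ℝ, v t = (lam (t ^ 2 / 2))⁻¹ * u t) :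
    ∀ s t : ℝ, v (s + t) = v s * v t := by
  have hu : ∀ s t : ℝ, u (s + t) =
      lam ((s + t) ^ 2 / 2) * (lam (t ^ 2 / 2))⁻¹ * (lam (s ^ 2 / 2))⁻¹ * (u s * u t) := by
    intro s t
    rw [← map_mul_eq_coboundary_half_sq lam hlhom, add_comm, hul, mul_comm]
  intro s t
  simp only [hv]
  exact inv_mul_map_add_of_central_coboundary (fun t => lam (t ^ 2 / 2)) u (fun t => hlZ _) hu s t

theorem one_parameter_group_from_cocycle {G : Type*} [Group G]
    (σ : ℝ → MulAut G) (hσ : ∀ s t : ℝ, σ (s + t) = σ s * σ t)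
    (hfix : ∀ (t : ℝ) (z : G), z ∈ Subgroup.center G → σ t z = z)
    (u : ℝ → G) (hu : ∀ s t : ℝ, u (s + t) = u t * σ t (u s))
    (lam : ℝ → G) (hlZ : ∀ t : ℝ, lam t ∈ Subgroup.center G)
    (hlhom : ∀ s t : ℝ, lam (s + t) = lam s * lam t)
    (hul : ∀ s t : ℝ, u (s + t) = lam (s * t) * (u t * u s))
    (v : ℝ → G) (hv : ∀ t : ℝ, v t = (lam (t ^ 2 / 2))⁻¹ * u t) :
    ∀ s t : ℝ, v (s + t) = v s * v t :=
  one_parameter_group_from_cocycle_general u lam hlZ hlhom hul v hv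
end

section
/- Let A be a unital complex star-algebra and σ : ℝ → Aut(A) a one-parameter group of star-automorphisms. Let u : ℝ → A be a map into the unitaries of A satisfying u(s+t) = u(t)·σ_t(u(s)), and suppose that u(t) = exp(ict²/2)·δ(t) for all t ∈ ℝ, where c ∈ ℝ and δ : ℝ → A is a one-parameter group of unitaries. Then σ_t(δ(s)) = exp(icst)·δ(s) for all s,t ∈ ℝ. -/
theorem scalar_cocycle_forces_relative_invariance {A : Type*} [Ring A] [StarRing A]
    [Algebra ℂ A] [StarModule ℂ A]
    (σ : ℝ → A ≃⋆ₐ[ℂ] A) (hσ : ∀ (s t : ℝ) (x : A), σ (s + t) x = σ s (σ t x))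
    (c : ℝ) (δ : ℝ → A)
    (hd : ∀ s t : ℝ, δ (s + t) = δ s * δ t) (hd0 : δ 0 = 1)
    (hds : ∀ t : ℝ, star (δ t) = δ (-t))
    (u : ℝ → A) (hu : ∀ t : ℝ, u t = Complex.exp (Complex.I * c * t ^ 2 / 2) • δ t)
    (hcoc : ∀ s t : ℝ, u (s + t) = u t * σ t (u s)) :
    ∀ s t : ℝ, σ t (δ s) = Complex.exp (Complex.I * c * s * t) • δ s := by
  intro s t
  set E1 : ℂ := Complex.exp (Complex.I * c * (t : ℂ) ^ 2 / 2) with hE1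
  set E2 : ℂ := Complex.exp (Complex.I * c * (s : ℂ) ^ 2 / 2) with hE2
  set E3 : ℂ := Complex.exp (Complex.I * c * s * t) with hE3
  have h := hcoc s t
  rw [hu, hu, hu, map_smul] at h
  have hexp : Complex.exp (Complex.I * c * ((s : ℂ) + t) ^ 2 / 2) = E1 * E2 * E3 := by
    rw [hE1, hE2, hE3, ← Complex.exp_add, ← Complex.exp_add]
    congr 1
    ring
  have hcast : ((s + t : ℝ) : ℂ) = (s : ℂ) + t := by push_cast; ring
  rw [hcast, hexp, hd] at h
  -- h : (E1 * E2 * E3) • (δ s * δ t) = (E1 • δ t) * (E2 • σ t (δ s))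
  have h' : (E1 * E2) • (E3 • (δ s * δ t)) = (E1 * E2) • (δ t * σ t (δ s)) := by
    rw [smul_smul, h, smul_mul_smul_comm]
  have h12 : (E1 * E2) ≠ 0 := mul_ne_zero (Complex.exp_ne_zero _) (Complex.exp_ne_zero _)
  have key : E3 • (δ s * δ t) = δ t * σ t (δ s) := by
    have := congrArg (fun x => (E1 * E2)⁻¹ • x) h'
    simp only [inv_smul_smul₀ h12] at this
    exact this
  have hinv : δ (-t) * δ (s + t) = δ s := by
    rw [← hd]; norm_num
  calc σ t (δ s) = δ (-t) * δ t * σ t (δ s) := by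
        rw [← hd, neg_add_cancel, hd0, one_mul]
    _ = δ (-t) * (δ t * σ t (δ s)) := by rw [mul_assoc]
    _ = δ (-t) * (E3 • (δ s * δ t)) := by rw [key]
    _ = E3 • (δ (-t) * δ (s + t)) := by rw [mul_smul_comm, hd]
    _ = E3 • δ s := by rw [hinv]
end
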